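/- Let (x; x_1,...,x_n) ∈ ℝ^{1+n} be reduced and let (d; d_1,...,d_n) ∈ ℝ^{1+n} be positive with −K·(d; d_i) ≥ 0 (i.e. Σ_i d_i ≤ 3d) and d ≥ max_i d_i. Then (x; x_i)·(d; d_i) ≥ 0. -/

import Mathlib

/-- The product `(x; x_i)·(y; y_i) = x*y - ∑ i, x_i * y_i` on `ℝ^{1+(n+3)}`. -/
def dotp {n : ℕ} (x y : ℝ × (Fin (n + 3) → ℝ)) : ℝ :=
  x.1 * y.1 - ∑ i, x.2 i * y.2 i

/-- The vector `-K = (3; 1, 1, …, 1)`. -/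
def negK {n : ℕ} : ℝ × (Fin (n + 3) → ℝ) := (3, fun _ => 1)

/-- The Cremona transform. -/
def Cr {n : ℕ} (d : ℝ × (Fin (n + 3) → ℝ)) : ℝ × (Fin (n + 3) → ℝ) :=
  (2 * d.1 - d.2 0 - d.2 1 - d.2 2,
    fun i =>
      if i = 0 then d.1 - d.2 1 - d.2 2
      else if i = 1 then d.1 - d.2 0 - d.2 2
      else if i = 2 then d.1 - d.2 0 - d.2 1
      else d.2 i)

/-- A vector is positive if all its entries are nonnegative. -/
def PositiveVec {n : ℕ} (d : ℝ × (Fin (n + 3) → ℝ)) : Prop :=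
  0 ≤ d.1 ∧ ∀ i, 0 ≤ d.2 i

/-- A vector is ordered if `d_i ≥ d_{i+1}` whenever both are nonzero, and nonzero
entries precede zero entries. -/
def OrderedVec {n : ℕ} (d : ℝ × (Fin (n + 3) → ℝ)) : Prop :=
  (∀ (i : ℕ) (h1 : i < n + 3) (h2 : i + 1 < n + 3),
      d.2 ⟨i, h1⟩ ≠ 0 → d.2 ⟨i + 1, h2⟩ ≠ 0 → d.2 ⟨i + 1, h2⟩ ≤ d.2 ⟨i, h1⟩) ∧
  (∀ i j : Fin (n + 3), d.2 i ≠ 0 → d.2 j = 0 → i < j)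

/-- A vector is reduced if it is positive, ordered, and `d ≥ d_1 + d_2 + d_3`. -/
def ReducedVec {n : ℕ} (d : ℝ × (Fin (n + 3) → ℝ)) : Prop :=
  PositiveVec d ∧ OrderedVec d ∧ d.2 0 + d.2 1 + d.2 2 ≤ d.1

/-- A vector has integer entries. -/
def IntVec {n : ℕ} (d : ℝ × (Fin (n + 3) → ℝ)) : Prop :=
  (∃ z : ℤ, d.1 = z) ∧ ∀ i, ∃ z : ℤ, d.2 i = z

/-- The set `E` of integer vectors with `(d;d_i)·(d;d_i) ≥ -1` and `-K·(d;d_i) = 1`. -/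
def ESet {n : ℕ} : Set (ℝ × (Fin (n + 3) → ℝ)) :=
  {d | IntVec d ∧ -1 ≤ dotp d d ∧ dotp negK d = 1}

/-- The set `C` of integer vectors with `(x;x_i)·(x;x_i) ≥ 0` that pair nonnegatively
with every element of `E`. -/
def CSet {n : ℕ} : Set (ℝ × (Fin (n + 3) → ℝ)) :=
  {x | IntVec x ∧ 0 ≤ dotp x x ∧ ∀ d ∈ ESet, 0 ≤ dotp x d}
/-! Proof: since `x_1 ≥ x_2 ≥ ⋯ ≥ 0`, split `∑ x_i d_i = ∑ (x_i - x_3) d_i + x_3 ∑ d_i`. In the first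
sum only the terms `i = 1, 2` can be positive, and they are at most `(x_i - x_3) d`; the second
is at most `3 x_3 d`. Hence `∑ x_i d_i ≤ (x_1 + x_2 + x_3) d ≤ x d`. -/

theorem OrderedVec.antitone {n : ℕ} {x : ℝ × (Fin (n + 3) → ℝ)} (hord : OrderedVec x)
    (hpos : ∀ i, 0 ≤ x.2 i) : Antitone x.2 := by
  refine Fin.antitone_iff_succ_le.2 fun i => ?_
  by_cases hsucc : x.2 i.succ = 0
  · exact hsucc ▸ hpos _
  by_cases hi : x.2 i.castSucc = 0
  · exact absurd (hord.2 _ _ hsucc hi) (not_lt.2 Fin.castSucc_lt_succ.le)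
  · exact hord.1 i i.castSucc.isLt i.succ.isLt hi hsucc

theorem Antitone.sum_mul_le_top_three_mul {n : ℕ} {a b : Fin (n + 3) → ℝ} {M : ℝ}
    (ha : Antitone a) (ha₂ : 0 ≤ a 2) (hb : ∀ i, 0 ≤ b i) (hbM : ∀ i, b i ≤ M)
    (hsum : ∑ i, b i ≤ 3 * M) :
    ∑ i, a i * b i ≤ (a 0 + a 1 + a 2) * M := by
  have htail : ∑ i : Fin (n + 1), a i.succ.succ * b i.succ.succ
      ≤ a 2 * ∑ i : Fin (n + 1), b i.succ.succ := by
    rw [Finset.mul_sum]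
    exact Finset.sum_le_sum fun i _ => mul_le_mul_of_nonneg_right
      (ha (Fin.succ_le_succ_iff.2 (Fin.succ_le_succ_iff.2 (Fin.zero_le i)))) (hb _)
  have h₀ : (a 0 - a 2) * b 0 ≤ (a 0 - a 2) * M :=
    mul_le_mul_of_nonneg_left (hbM 0) (sub_nonneg.2 (ha (Fin.zero_le 2)))
  have h₁ : (a 1 - a 2) * b 1 ≤ (a 1 - a 2) * M :=
    mul_le_mul_of_nonneg_left (hbM 1)
      (sub_nonneg.2 (ha (Fin.succ_le_succ_iff.2 (Fin.zero_le (1 : Fin (n + 2))))))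
  have h₂ : a 2 * ∑ i, b i ≤ a 2 * (3 * M) := mul_le_mul_of_nonneg_left hsum ha₂
  simp only [Fin.sum_univ_succ, Fin.succ_zero_eq_one, Fin.succ_one_eq_two] at htail h₂ ⊢
  linarith

theorem dotp_negK {n : ℕ} (d : ℝ × (Fin (n + 3) → ℝ)) :
    dotp negK d = 3 * d.1 - ∑ i, d.2 i := by
  simp [dotp, negK]

theorem intersection_positivity {n : ℕ} (x d : ℝ × (Fin (n + 3) → ℝ))
    (hx : ReducedVec x) (hd : PositiveVec d) (hK : 0 ≤ dotp negK d)
    (hmax : ∀ i, d.2 i ≤ d.1) :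
    0 ≤ dotp x d := by
  obtain ⟨⟨-, hxpos⟩, hord, hred⟩ := hx
  have hsum : ∑ i, d.2 i ≤ 3 * d.1 := by rw [dotp_negK] at hK; linarith
  have hbound := (hord.antitone hxpos).sum_mul_le_top_three_mul (hxpos 2) hd.2 hmax hsum
  have hred' := mul_le_mul_of_nonneg_right hred hd.1
  rw [dotp]
  linarith
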